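/- arXiv:2308.02701 — 2 statements merged into one kernel-verified Lean document; each statement's English description precedes it below -/
import Mathlib

section
/- Let A be an N×N complex matrix with A(i,j) = 0 whenever |i−j| > r (a two-sided band matrix of order r). Then A admits a factorization A = U·R, where U is a unitary matrix of the form U = Ũ_1·Ũ_2⋯Ũ_{N−r+1} (product in increasing order of indices) with embedded factors built from unitary matrices U_k ∈ ℂ^{(r+1)×(r+1)} (k = 1,…,N−r) and a unitary matrix U_{N−r+1} ∈ ℂ^{r×r}, and R is an upper triangular matrix satisfying R(i,j) = 0 whenever j − i > 2r. -/
open Matrix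

noncomputable section

/-- `A(i,j) = 0` whenever `i - j > r` (1-based; identical in 0-based `Fin` indexing). -/
def IsLowerBand (N r : ℕ) (A : Matrix (Fin N) (Fin N) ℂ) : Prop :=
  ∀ i j : Fin N, (j : ℕ) + r < (i : ℕ) → A i j = 0

/-- `A(i,j) = 0` whenever `j - i > r`. -/
def IsUpperBand (N r : ℕ) (A : Matrix (Fin N) (Fin N) ℂ) : Prop :=
  ∀ i j : Fin N, (i : ℕ) + r < (j : ℕ) → A i j = 0

/-- `rank B(k:N, 1:k+r-1) ≤ r` for every `k = 1, …, N-r` (1-based). -/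
def IsLowerGreen (N r : ℕ) (B : Matrix (Fin N) (Fin N) ℂ) : Prop :=
  ∀ (k : ℕ) (hk1 : 1 ≤ k) (hk2 : k ≤ N - r),
    (B.submatrix
      (fun i : Fin (N - k + 1) => (⟨k - 1 + (i : ℕ), by have := i.isLt; omega⟩ : Fin N))
      (fun j : Fin (k + r - 1) => (⟨(j : ℕ), by have := j.isLt; omega⟩ : Fin N))).rank ≤ r

/-- `rank B(1:k+r-1, k:N) ≤ r` for every `k = 1, …, N-r` (1-based). -/
def IsUpperGreen (N r : ℕ) (B : Matrix (Fin N) (Fin N) ℂ) : Prop :=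
  ∀ (k : ℕ) (hk1 : 1 ≤ k) (hk2 : k ≤ N - r),
    (B.submatrix
      (fun i : Fin (k + r - 1) => (⟨(i : ℕ), by have := i.isLt; omega⟩ : Fin N))
      (fun j : Fin (N - k + 1) => (⟨k - 1 + (j : ℕ), by have := j.isLt; omega⟩ : Fin N))).rank ≤ r

/-- `a^>_{i,s} = a(i-1) a(i-2) ⋯ a(s+1)`, equal to `I_r` when `s ≥ i - 1`. -/
def aGT (r : ℕ) (a : ℕ → Matrix (Fin r) (Fin r) ℂ) (i s : ℕ) :
    Matrix (Fin r) (Fin r) ℂ :=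
  (((List.range' (s + 1) (i - 1 - s)).reverse).map a).prod

/-- `p(i) ∈ ℂ^{1×r}` (i = 1,…,N−r), `pLast = p(N−r+1) ∈ ℂ^{r×r}`, `q(j) ∈ ℂ^{r×1}`,
`a(k) ∈ ℂ^{r×r}` are lower Green generators of the `N×N` matrix `B`:
`B(i,1:r) = p(i)·a^>_{i,0}`, `B(i,r+s-1) = p(i)·a^>_{i,s-1}·q(s-1)` for `2 ≤ s ≤ i ≤ N-r`,
and the analogous identities for the last `r` rows `B(N-r+1:N, ·)` with `pLast`. -/
def IsLowerGreenGenerators (N r : ℕ) (hNr : r < N)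
    (p : ℕ → Matrix (Fin 1) (Fin r) ℂ) (q : ℕ → Matrix (Fin r) (Fin 1) ℂ)
    (a : ℕ → Matrix (Fin r) (Fin r) ℂ) (pLast : Matrix (Fin r) (Fin r) ℂ)
    (B : Matrix (Fin N) (Fin N) ℂ) : Prop :=
  (∀ (i : ℕ) (hi1 : 1 ≤ i) (hi2 : i ≤ N - r) (j : Fin r),
      B ⟨i - 1, by omega⟩ ⟨(j : ℕ), by have := j.isLt; omega⟩ = (p i * aGT r a i 0) 0 j)
  ∧ (∀ (i : ℕ) (hi1 : 1 ≤ i) (hi2 : i ≤ N - r) (s : ℕ) (hs1 : 2 ≤ s) (hs2 : s ≤ i),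
      B ⟨i - 1, by omega⟩ ⟨r + s - 2, by omega⟩
        = (p i * aGT r a i (s - 1) * q (s - 1)) 0 0)
  ∧ (∀ (t : Fin r) (j : Fin r),
      B ⟨N - r + (t : ℕ), by have := t.isLt; omega⟩ ⟨(j : ℕ), by have := j.isLt; omega⟩
        = (pLast * aGT r a (N - r + 1) 0) t j)
  ∧ (∀ (t : Fin r) (s : ℕ) (hs1 : 2 ≤ s) (hs2 : s ≤ N - r + 1),
      B ⟨N - r + (t : ℕ), by have := t.isLt; omega⟩ ⟨r + s - 2, by omega⟩
        = (pLast * aGT r a (N - r + 1) (s - 1) * q (s - 1)) t 0)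

/-- The embedded factor `I_{k-1} ⊕ M ⊕ I_{N-k-r}` (1-based block position `k`),
i.e. `M` occupies (1-based) rows and columns `k, …, k+r` of an `N×N` identity. -/
def embed (N r k : ℕ) (M : Matrix (Fin (r + 1)) (Fin (r + 1)) ℂ) :
    Matrix (Fin N) (Fin N) ℂ :=
  Matrix.of fun i j =>
    if h : k - 1 ≤ (i : ℕ) ∧ (i : ℕ) < k + r ∧ k - 1 ≤ (j : ℕ) ∧ (j : ℕ) < k + r then
      M ⟨(i : ℕ) - (k - 1), by omega⟩ ⟨(j : ℕ) - (k - 1), by omega⟩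
    else if (i : ℕ) = (j : ℕ) then 1 else 0

/-- The embedded last factor `I_{N-r} ⊕ M`. -/
def embedLast (N r : ℕ) (M : Matrix (Fin r) (Fin r) ℂ) : Matrix (Fin N) (Fin N) ℂ :=
  Matrix.of fun i j =>
    if h : N - r ≤ (i : ℕ) ∧ N - r ≤ (j : ℕ) then
      M ⟨(i : ℕ) - (N - r), by have := i.isLt; omega⟩
        ⟨(j : ℕ) - (N - r), by have := j.isLt; omega⟩
    else if (i : ℕ) = (j : ℕ) then 1 else 0

/-- `G̃_1 · G̃_2 ⋯ G̃_{N-r}` (increasing order of indices). -/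
def prodAsc (N r : ℕ) (G : ℕ → Matrix (Fin (r + 1)) (Fin (r + 1)) ℂ) :
    Matrix (Fin N) (Fin N) ℂ :=
  ((List.range' 1 (N - r)).map (fun k => embed N r k (G k))).prod

/-- `G̃_{N-r} · G̃_{N-r-1} ⋯ G̃_1` (decreasing order of indices). -/
def prodDesc (N r : ℕ) (G : ℕ → Matrix (Fin (r + 1)) (Fin (r + 1)) ℂ) :
    Matrix (Fin N) (Fin N) ℂ :=
  (((List.range' 1 (N - r)).reverse).map (fun k => embed N r k (G k))).prod

/-- The `1×r` block `p` of the partition `M = [[p, d], [a, q]]`. -/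
def blkP (r : ℕ) (M : Matrix (Fin (r + 1)) (Fin (r + 1)) ℂ) : Matrix (Fin 1) (Fin r) ℂ :=
  Matrix.of fun _ j => M 0 j.castSucc

/-- The `1×1` block `d` of the partition `M = [[p, d], [a, q]]`. -/
def blkD (r : ℕ) (M : Matrix (Fin (r + 1)) (Fin (r + 1)) ℂ) : ℂ := M 0 (Fin.last r)

/-- The `r×r` block `a` of the partition `M = [[p, d], [a, q]]`. -/
def blkA (r : ℕ) (M : Matrix (Fin (r + 1)) (Fin (r + 1)) ℂ) : Matrix (Fin r) (Fin r) ℂ :=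
  Matrix.of fun i j => M i.succ j.castSucc

/-- The `r×1` block `q` of the partition `M = [[p, d], [a, q]]`. -/
def blkQ (r : ℕ) (M : Matrix (Fin (r + 1)) (Fin (r + 1)) ℂ) : Matrix (Fin r) (Fin 1) ℂ :=
  Matrix.of fun i _ => M i.succ (Fin.last r)

/-- Assemble the `(r+1)×(r+1)` matrix `[[p, d], [a, q]]` from its blocks. -/
def mkBlk (r : ℕ) (p : Matrix (Fin 1) (Fin r) ℂ) (d : ℂ)
    (a : Matrix (Fin r) (Fin r) ℂ) (q : Matrix (Fin r) (Fin 1) ℂ) :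
    Matrix (Fin (r + 1)) (Fin (r + 1)) ℂ :=
  Matrix.of fun i j =>
    if hi : (i : ℕ) = 0 then
      if hj : (j : ℕ) < r then p 0 ⟨(j : ℕ), hj⟩ else d
    else
      if hj : (j : ℕ) < r then a ⟨(i : ℕ) - 1, by have := i.isLt; omega⟩ ⟨(j : ℕ), hj⟩
      else q ⟨(i : ℕ) - 1, by have := i.isLt; omega⟩ 0

/-- The elementary Gauss factor `[[1, 0_{1×r}], [-f, I_r]]`. -/
def elemL (r : ℕ) (f : Matrix (Fin r) (Fin 1) ℂ) :
    Matrix (Fin (r + 1)) (Fin (r + 1)) ℂ :=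
  Matrix.of fun i j =>
    if hi : (i : ℕ) = 0 then (if (j : ℕ) = 0 then 1 else 0)
    else if hj : (j : ℕ) = 0 then -f ⟨(i : ℕ) - 1, by have := i.isLt; omega⟩ 0
    else if (i : ℕ) = (j : ℕ) then 1 else 0

/-- The elementary factor `[[I_r, 0_{r×1}], [-g, 1]]`. -/
def elemLrow (r : ℕ) (g : Matrix (Fin 1) (Fin r) ℂ) :
    Matrix (Fin (r + 1)) (Fin (r + 1)) ℂ :=
  Matrix.of fun i j =>
    if hi : (i : ℕ) < r then
      (if hj : (j : ℕ) < r then (if (i : ℕ) = (j : ℕ) then 1 else 0) else 0)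
    else if hj : (j : ℕ) < r then -g 0 ⟨(j : ℕ), hj⟩ else 1

/-- All leading principal minors are nonzero. -/
def StronglyRegular (N : ℕ) (A : Matrix (Fin N) (Fin N) ℂ) : Prop :=
  ∀ (k : ℕ) (hk : k ≤ N), 1 ≤ k →
    (A.submatrix (Fin.castLE hk) (Fin.castLE hk)).det ≠ 0

/-!
Windowed Householder elimination. For `k = 1, …, N - r`, the subdiagonal nonzeros of column `k`
of the current matrix lie in rows `k, …, k + r` (the rows below are still those of the band
matrix `A`), so a unitary `(r+1)×(r+1)` matrix acting on these rows annihilates them. Row `i` is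
only ever combined with rows `≤ i + r` of `A`, whose entries vanish beyond column `i + 2r`; this
keeps the reduced matrix inside the upper band of order `2r`. A unitary QR factorization of the
trailing `r×r` block completes the triangularization, and moving the unitary factors to the other
side gives `A = U R`.
-/

namespace Matrix

variable {𝕜 : Type*} [RCLike 𝕜] {ι : Type*} [Fintype ι] [LinearOrder ι] [LocallyFiniteOrderBot ι]

theorem exists_mem_unitaryGroup_mul_isUpperTriangular (B : Matrix ι ι 𝕜) :
    ∃ Q ∈ unitaryGroup ι 𝕜, (Q * B).IsUpperTriangular := by
  classical
  let f : ι → EuclideanSpace 𝕜 ι := fun j => WithLp.toLp 2 (fun i => B i j)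
  let b := InnerProductSpace.gramSchmidtOrthonormalBasis (finrank_euclideanSpace (𝕜 := 𝕜)) f
  refine ⟨b.toBasis.toMatrix (EuclideanSpace.basisFun ι 𝕜),
    b.toMatrix_orthonormalBasis_mem_unitary _, ?_⟩
  have hB : (EuclideanSpace.basisFun ι 𝕜).toBasis.toMatrix f = B := by
    ext i j; rfl
  have := b.toBasis.toMatrix_mul_toMatrix (EuclideanSpace.basisFun ι 𝕜).toBasis f
  rw [OrthonormalBasis.coe_toBasis, hB] at this
  rw [this]
  exact InnerProductSpace.gramSchmidtOrthonormalBasis_inv_isUpperTriangular _ f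

theorem exists_mem_unitaryGroup_mulVec_eq_zero {n : ℕ} (v : Fin (n + 1) → 𝕜) :
    ∃ W ∈ unitaryGroup (Fin (n + 1)) 𝕜, ∀ i, i ≠ 0 → (W *ᵥ v) i = 0 := by
  obtain ⟨W, hW, htri⟩ :=
    exists_mem_unitaryGroup_mul_isUpperTriangular (of fun i (_ : Fin (n + 1)) => v i)
  refine ⟨W, hW, fun i hi => ?_⟩
  simpa [mul_apply, mulVec, dotProduct] using
    htri (i := i) (j := 0) (Fin.pos_iff_ne_zero.mpr hi)

section blockEmbed

variable {ι β κ α : Type*} [DecidableEq β]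

def blockEmbed [Zero α] [One α] (σ : ι ⊕ β ≃ κ) (M : Matrix ι ι α) : Matrix κ κ α :=
  reindex σ σ (fromBlocks M 0 0 1)

variable (σ : ι ⊕ β ≃ κ)

theorem blockEmbed_one [DecidableEq ι] [DecidableEq κ] [Zero α] [One α] :
    blockEmbed σ (1 : Matrix ι ι α) = 1 := by
  simp [blockEmbed, fromBlocks_one]

theorem blockEmbed_mul [Fintype ι] [Fintype β] [Fintype κ] [Semiring α] (M M' : Matrix ι ι α) :
    blockEmbed σ (M * M') = blockEmbed σ M * blockEmbed σ M' := by
  simp [blockEmbed, fromBlocks_multiply, submatrix_mul_equiv]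

theorem conjTranspose_blockEmbed [Semiring α] [StarRing α] (M : Matrix ι ι α) :
    (blockEmbed σ M)ᴴ = blockEmbed σ Mᴴ := by
  simp [blockEmbed, fromBlocks_conjTranspose, conjTranspose_submatrix]

theorem blockEmbed_mem_unitaryGroup [Fintype ι] [Fintype β] [Fintype κ] [DecidableEq ι]
    [DecidableEq κ] [CommRing α] [StarRing α] {M : Matrix ι ι α}
    (hM : M ∈ unitaryGroup ι α) : blockEmbed σ M ∈ unitaryGroup κ α := by
  rw [mem_unitaryGroup_iff, star_eq_conjTranspose, conjTranspose_blockEmbed, ← blockEmbed_mul,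
    ← star_eq_conjTranspose, mem_unitaryGroup_iff.mp hM, blockEmbed_one]

theorem blockEmbed_star_mul_cancel_left [Fintype ι] [Fintype β] [Fintype κ] [DecidableEq ι]
    [DecidableEq κ] [CommRing α] [StarRing α] {W : Matrix ι ι α} (hW : W ∈ unitaryGroup ι α)
    (B : Matrix κ κ α) : blockEmbed σ (star W) * (blockEmbed σ W * B) = B := by
  rw [← mul_assoc, ← blockEmbed_mul, Unitary.star_mul_self_of_mem hW, blockEmbed_one, one_mul]

theorem blockEmbed_mul_apply_inl [Fintype ι] [Fintype β] [Fintype κ] [Semiring α]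
    (M : Matrix ι ι α) (B : Matrix κ κ α) (a : ι) (j : κ) :
    (blockEmbed σ M * B) (σ (.inl a)) j = ∑ b, M a b * B (σ (.inl b)) j := by
  simp [blockEmbed, mul_apply, ← σ.sum_comp, Fintype.sum_sum_type]

theorem blockEmbed_mul_apply_inr [Fintype ι] [Fintype β] [Fintype κ] [Semiring α]
    (M : Matrix ι ι α) (B : Matrix κ κ α) (c : β) (j : κ) :
    (blockEmbed σ M * B) (σ (.inr c)) j = B (σ (.inr c)) j := by
  simp [blockEmbed, mul_apply, ← σ.sum_comp, Fintype.sum_sum_type, one_apply]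

end blockEmbed

def finWindowEquiv {m n N : ℕ} (h : m + n ≤ N) :
    Fin n ⊕ {i : Fin N // ¬(m ≤ (i : ℕ) ∧ (i : ℕ) < m + n)} ≃ Fin N :=
  let window : Fin n ≃ {i : Fin N // m ≤ (i : ℕ) ∧ (i : ℕ) < m + n} :=
    { toFun := fun a => ⟨⟨m + a, by omega⟩, by simp, by simp⟩
      invFun := fun i => ⟨(i : ℕ) - m, by omega⟩
      left_inv := fun a => by ext; simp
      right_inv := fun i => by ext; simp; omega }
  (Equiv.sumCongr window (Equiv.refl _)).trans (Equiv.sumCompl _)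

@[simp]
theorem finWindowEquiv_inl {m n N : ℕ} (h : m + n ≤ N) (a : Fin n) :
    (finWindowEquiv h (.inl a) : ℕ) = m + a := rfl

theorem finWindowEquiv_symm_apply {m n N : ℕ} (h : m + n ≤ N) (i : Fin N) :
    (finWindowEquiv h).symm i =
      if hi : m ≤ (i : ℕ) ∧ (i : ℕ) < m + n then .inl ⟨(i : ℕ) - m, by omega⟩
      else .inr ⟨i, hi⟩ := by
  split_ifs with hi <;> rw [Equiv.symm_apply_eq]
  · exact Fin.ext (by simp; omega)
  · rfl

theorem blockEmbed_finWindowEquiv_apply [Zero α] [One α] {m n N : ℕ} (h : m + n ≤ N)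
    (M : Matrix (Fin n) (Fin n) α) (i j : Fin N) :
    blockEmbed (finWindowEquiv h) M i j =
      if hij : (m ≤ (i : ℕ) ∧ (i : ℕ) < m + n) ∧ (m ≤ (j : ℕ) ∧ (j : ℕ) < m + n) then
        M ⟨(i : ℕ) - m, by omega⟩ ⟨(j : ℕ) - m, by omega⟩
      else (1 : Matrix (Fin N) (Fin N) α) i j := by
  simp only [blockEmbed, reindex_apply, submatrix_apply, finWindowEquiv_symm_apply]
  split_ifs <;> simp_all [one_apply, Fin.ext_iff] <;> omega

theorem blockEmbed_finWindowEquiv_mul_apply [Semiring α] {m n N : ℕ} (h : m + n ≤ N)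
    (M : Matrix (Fin n) (Fin n) α) (B : Matrix (Fin N) (Fin N) α) (i j : Fin N) :
    (blockEmbed (finWindowEquiv h) M * B) i j =
      if hi : m ≤ (i : ℕ) ∧ (i : ℕ) < m + n then
        ∑ s : Fin n, M ⟨(i : ℕ) - m, by omega⟩ s * B ⟨m + s, by omega⟩ j
      else B i j := by
  split_ifs with hi
  · have hi' : i = finWindowEquiv h (.inl ⟨(i : ℕ) - m, by omega⟩) := Fin.ext (by simp; omega)
    conv_lhs => rw [hi', blockEmbed_mul_apply_inl]
    rfl
  · exact blockEmbed_mul_apply_inr (finWindowEquiv h) M B ⟨i, hi⟩ j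

end Matrix

theorem embed_succ_eq_blockEmbed {N r m : ℕ} (h : m + (r + 1) ≤ N)
    (M : Matrix (Fin (r + 1)) (Fin (r + 1)) ℂ) :
    embed N r (m + 1) M = blockEmbed (finWindowEquiv h) M := by
  ext i j
  simp only [blockEmbed_finWindowEquiv_apply, embed, of_apply, Nat.add_sub_cancel]
  split_ifs <;> simp_all [one_apply, Fin.ext_iff] <;> omega

theorem embedLast_eq_blockEmbed {N r : ℕ} (hrN : r ≤ N) (M : Matrix (Fin r) (Fin r) ℂ) :
    embedLast N r M = blockEmbed (finWindowEquiv (Nat.sub_add_cancel hrN).le) M := by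
  ext i j
  simp only [blockEmbed_finWindowEquiv_apply, embedLast, of_apply]
  split_ifs <;> simp_all [one_apply, Fin.ext_iff]

theorem prodAsc_mem_unitaryGroup {N r : ℕ} {U : ℕ → Matrix (Fin (r + 1)) (Fin (r + 1)) ℂ}
    (hU : ∀ k, 1 ≤ k → k ≤ N - r → U k ∈ unitaryGroup (Fin (r + 1)) ℂ) :
    prodAsc N r U ∈ unitaryGroup (Fin N) ℂ := by
  refine Submonoid.list_prod_mem _ fun M hM => ?_
  obtain ⟨k, hk, rfl⟩ := List.mem_map.mp hM
  obtain ⟨hk1, hk2⟩ := List.mem_range'_1.mp hk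
  obtain ⟨m, rfl⟩ := Nat.exists_eq_add_of_le' hk1
  rw [embed_succ_eq_blockEmbed (by omega)]
  exact blockEmbed_mem_unitaryGroup _ (hU _ hk1 (by omega))

theorem embedLast_mem_unitaryGroup {N r : ℕ} (hrN : r ≤ N) {Q : Matrix (Fin r) (Fin r) ℂ}
    (hQ : Q ∈ unitaryGroup (Fin r) ℂ) : embedLast N r Q ∈ unitaryGroup (Fin N) ℂ := by
  rw [embedLast_eq_blockEmbed hrN]
  exact blockEmbed_mem_unitaryGroup _ hQ

section BandQR

variable {N r : ℕ}

structure IsBandQRStage (r k : ℕ) (M : Matrix (Fin N) (Fin N) ℂ) : Prop where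
  triangular : ∀ i j : Fin N, (j : ℕ) < k → j < i → M i j = 0
  band : ∀ i j : Fin N, k + r ≤ (i : ℕ) → ((j : ℕ) + r < i ∨ (i : ℕ) + r < j) → M i j = 0
  upperBand : ∀ i j : Fin N, (i : ℕ) < k + r → min (i : ℕ) k + 2 * r < j → M i j = 0

theorem isBandQRStage_zero {A : Matrix (Fin N) (Fin N) ℂ}
    (hband : ∀ i j : Fin N, ((j : ℕ) + r < (i : ℕ) ∨ (i : ℕ) + r < (j : ℕ)) → A i j = 0) :
    IsBandQRStage r 0 A where
  triangular _ _ h := absurd h (Nat.not_lt_zero _)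
  band i j _ h := hband i j h
  upperBand i j hi hj := hband i j (.inr (by omega))

theorem IsBandQRStage.succ {k : ℕ} {M : Matrix (Fin N) (Fin N) ℂ} (hM : IsBandQRStage r k M)
    (hk : k + (r + 1) ≤ N) {W : Matrix (Fin (r + 1)) (Fin (r + 1)) ℂ}
    (hW : ∀ t, t ≠ 0 → (W *ᵥ fun s => M ⟨k + s, by omega⟩ ⟨k, by omega⟩) t = 0) :
    IsBandQRStage r (k + 1) (embed N r (k + 1) W * M) := by
  rw [embed_succ_eq_blockEmbed hk]
  constructor
  · intro i j hj hji
    rw [blockEmbed_finWindowEquiv_mul_apply]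
    split_ifs with hi
    · rcases Nat.lt_or_ge (j : ℕ) k with hjk | hjk
      · exact Finset.sum_eq_zero fun s _ => by
          rw [hM.triangular _ j hjk (show (j : ℕ) < k + s by omega), mul_zero]
      · rw [show j = ⟨k, by omega⟩ from Fin.ext (by simp only; omega)]
        exact hW _ (by simp [Fin.ext_iff]; omega)
    · rcases Nat.lt_or_ge (i : ℕ) k with hik | hik
      · exact hM.triangular i j (by omega) hji
      · exact hM.band i j (by omega) (.inl (by omega))
  · intro i j hi hij
    rw [blockEmbed_finWindowEquiv_mul_apply, dif_neg (by omega)]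
    exact hM.band i j (by omega) hij
  · intro i j hi hij
    rw [blockEmbed_finWindowEquiv_mul_apply]
    split_ifs with hwin
    · refine Finset.sum_eq_zero fun s _ => ?_
      rcases Nat.lt_or_ge (s : ℕ) r with hs | hs
      · rw [hM.upperBand _ j (by simp; omega) (by simp; omega), mul_zero]
      · rw [hM.band _ j (by simp; omega) (.inr (by simp; omega)), mul_zero]
    · exact hM.upperBand i j (by omega) (by omega)

theorem exists_isBandQRStage {A : Matrix (Fin N) (Fin N) ℂ}
    (hband : ∀ i j : Fin N, ((j : ℕ) + r < (i : ℕ) ∨ (i : ℕ) + r < (j : ℕ)) → A i j = 0)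
    (k : ℕ) (hk : k ≤ N - r) :
    ∃ (U : ℕ → Matrix (Fin (r + 1)) (Fin (r + 1)) ℂ) (M : Matrix (Fin N) (Fin N) ℂ),
      (∀ m, U m ∈ unitaryGroup (Fin (r + 1)) ℂ) ∧ IsBandQRStage r k M ∧
      A = ((List.range' 1 k).map fun m => embed N r m (U m)).prod * M := by
  induction k with
  | zero => exact ⟨1, A, fun _ => one_mem _, isBandQRStage_zero hband, by simp⟩
  | succ k ih =>
    obtain ⟨U, M, hU, hM, hA⟩ := ih (by omega)
    have hkN : k + (r + 1) ≤ N := by omega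
    obtain ⟨W, hW, hWcol⟩ := exists_mem_unitaryGroup_mulVec_eq_zero
      fun s : Fin (r + 1) => M ⟨k + s, by omega⟩ ⟨k, by omega⟩
    refine ⟨Function.update U (k + 1) (star W), embed N r (k + 1) W * M,
      fun m => ?_, hM.succ hkN hWcol, ?_⟩
    · rcases eq_or_ne m (k + 1) with rfl | hm
      · simpa using Unitary.star_mem hW
      · simpa [hm] using hU m
    · have hprefix : ((List.range' 1 k).map fun m =>
            embed N r m (Function.update U (k + 1) (star W) m)) =
          (List.range' 1 k).map fun m => embed N r m (U m) :=
        List.map_congr_left fun m hm => by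
          rw [Function.update_of_ne (by have := List.mem_range'_1.mp hm; omega)]
      rw [List.range'_concat, List.map_append, List.prod_append, hprefix, one_mul, add_comm 1 k,
        List.map_singleton, List.prod_singleton, Function.update_self, mul_assoc,
        embed_succ_eq_blockEmbed hkN, embed_succ_eq_blockEmbed hkN,
        blockEmbed_star_mul_cancel_left _ hW, hA]

theorem IsBandQRStage.exists_embedLast_mul_isUpperTriangular (hrN : r ≤ N)
    {M : Matrix (Fin N) (Fin N) ℂ} (hM : IsBandQRStage r (N - r) M) :
    ∃ Q ∈ unitaryGroup (Fin r) ℂ, (embedLast N r Q * M).IsUpperTriangular ∧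
      ∀ i j : Fin N, (i : ℕ) + 2 * r < j → (embedLast N r Q * M) i j = 0 := by
  obtain ⟨Q, hQ, htri⟩ := exists_mem_unitaryGroup_mul_isUpperTriangular
    (of fun s t : Fin r => M ⟨N - r + s, by omega⟩ ⟨N - r + t, by omega⟩)
  refine ⟨Q, hQ, fun i j (hji : j < i) => ?_, fun i j hij => ?_⟩ <;>
    rw [embedLast_eq_blockEmbed hrN, blockEmbed_finWindowEquiv_mul_apply]
  · split_ifs with hi
    · rcases Nat.lt_or_ge (j : ℕ) (N - r) with hj | hj
      · exact Finset.sum_eq_zero fun s _ => by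
          rw [hM.triangular _ j hj (show (j : ℕ) < N - r + s by omega), mul_zero]
      · have := htri (i := ⟨i - (N - r), by omega⟩) (j := ⟨j - (N - r), by omega⟩)
          (show (j : ℕ) - (N - r) < i - (N - r) by omega)
        rw [mul_apply] at this
        convert this using 4 with s
        exact congrArg _ (Fin.ext (by simp only; omega))
    · exact hM.triangular i j (by omega) hji
  · rw [dif_neg (by omega)]
    exact hM.upperBand i j (by omega) (by omega)

end BandQR

theorem twoSidedBand_qr_general (N r : ℕ) (hNr : r < N)
    (A : Matrix (Fin N) (Fin N) ℂ)
    (hband : ∀ i j : Fin N, ((j : ℕ) + r < (i : ℕ) ∨ (i : ℕ) + r < (j : ℕ)) → A i j = 0) :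
    ∃ (Uk : ℕ → Matrix (Fin (r + 1)) (Fin (r + 1)) ℂ)
      (Ulast : Matrix (Fin r) (Fin r) ℂ) (R : Matrix (Fin N) (Fin N) ℂ),
      (∀ (k : ℕ), 1 ≤ k → k ≤ N - r → Uk k ∈ Matrix.unitaryGroup (Fin (r + 1)) ℂ) ∧
      Ulast ∈ Matrix.unitaryGroup (Fin r) ℂ ∧
      (prodAsc N r Uk * embedLast N r Ulast) ∈ Matrix.unitaryGroup (Fin N) ℂ ∧
      (∀ i j : Fin N, (j : ℕ) < (i : ℕ) → R i j = 0) ∧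
      (∀ i j : Fin N, (i : ℕ) + 2 * r < (j : ℕ) → R i j = 0) ∧
      A = (prodAsc N r Uk * embedLast N r Ulast) * R := by
  obtain ⟨U, M, hU, hM, hA⟩ := exists_isBandQRStage hband (N - r) le_rfl
  obtain ⟨Q, hQ, htri, hupper⟩ := hM.exists_embedLast_mul_isUpperTriangular hNr.le
  refine ⟨U, star Q, embedLast N r Q * M, fun k _ _ => hU k, Unitary.star_mem hQ,
    mul_mem (prodAsc_mem_unitaryGroup fun k _ _ => hU k)
      (embedLast_mem_unitaryGroup hNr.le (Unitary.star_mem hQ)),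
    fun i j h => htri h, hupper, ?_⟩
  rwa [mul_assoc, embedLast_eq_blockEmbed hNr.le, embedLast_eq_blockEmbed hNr.le,
    blockEmbed_star_mul_cancel_left _ hQ]

/-- Every two-sided band matrix `A` of order `r` admits a factorization `A = U·R` with `U`
a product of embedded unitary factors and `R` upper triangular and upper band of order `2r`. -/
theorem twoSidedBand_qr (N r : ℕ) (hr : 0 < r) (hNr : r < N)
    (A : Matrix (Fin N) (Fin N) ℂ)
    (hband : ∀ i j : Fin N, ((j : ℕ) + r < (i : ℕ) ∨ (i : ℕ) + r < (j : ℕ)) → A i j = 0) :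
    ∃ (Uk : ℕ → Matrix (Fin (r + 1)) (Fin (r + 1)) ℂ)
      (Ulast : Matrix (Fin r) (Fin r) ℂ) (R : Matrix (Fin N) (Fin N) ℂ),
      (∀ (k : ℕ), 1 ≤ k → k ≤ N - r → Uk k ∈ Matrix.unitaryGroup (Fin (r + 1)) ℂ) ∧
      Ulast ∈ Matrix.unitaryGroup (Fin r) ℂ ∧
      (prodAsc N r Uk * embedLast N r Ulast) ∈ Matrix.unitaryGroup (Fin N) ℂ ∧
      (∀ i j : Fin N, (j : ℕ) < (i : ℕ) → R i j = 0) ∧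
      (∀ i j : Fin N, (i : ℕ) + 2 * r < (j : ℕ) → R i j = 0) ∧
      A = (prodAsc N r Uk * embedLast N r Ulast) * R :=
  twoSidedBand_qr_general N r hNr A hband
end
end

section
/- Let L_k ∈ ℂ^{(r+1)×(r+1)} (k = 1,…,N−r) and L_{N−r+1} ∈ ℂ^{r×r} all be lower triangular matrices, and set G = L̃_{N−r+1}·L̃_{N−r}·L̃_{N−r−1}⋯L̃_1 (product in decreasing order of indices of the embedded factors). Partition each L_k = [[p_L(k), d_L(k)],[a_L(k), q_L(k)]] with blocks of sizes 1×r, 1×1, r×r, r×1, and set p_L(N−r+1) = L_{N−r+1}. Then G is a lower triangular matrix, G is simultaneously a lower Green matrix of order r and an upper band matrix of order r, and p_L(i), q_L(i), a_L(i) (i = 1,…,N−r), p_L(N−r+1) are lower Green generators of G. -/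
open Matrix

noncomputable section

/-!
Write `B_m = L̃_m ⋯ L̃_1` and let `R_m` be the `r × N` matrix of rows `m + 1, …, m + r` of `B_m`
(1-based). The factors after `L̃_{m+1}` do not touch row `m + 1`, so row `m + 1` of `G` is
`p(m+1) R_m`, and the last `r` rows of `G` are `p(N-r+1) R_{N-r}`. The block form of `L_{m+1}`
gives `R_{m+1} = a(m+1) R_m + q(m+1) e_{m+r+1}ᵀ`. Lower triangularity keeps every `R_m` lower
triangular as a piece of `B_m`, whence `G` is lower triangular and column `m + r` of `R_m` is
`q(m)`; on the columns `1, …, k + r` the second term never contributes after step `k`, so there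
`R_m = a^>_{m+1,k} R_k`. This gives the generator formulas, and it shows that rows `k, …, N` of
`G`, cut to the columns `1, …, k + r - 1`, are combinations of the `r` rows of `R_{k-1}`.
-/

theorem Fin.sum_univ_eq_sum_window {M : Type*} [AddCommMonoid M] {N w : ℕ} (m : ℕ)
    (hmw : m + w ≤ N) (f : Fin N → M) (hf : ∀ l : Fin N, (l : ℕ) < m ∨ m + w ≤ l → f l = 0) :
    ∑ l, f l = ∑ u : Fin w, f ⟨m + u, by have := u.isLt; omega⟩ := by
  let e : Fin w ↪ Fin N :=
    ⟨fun u => ⟨m + u, by have := u.isLt; omega⟩, fun u v h => by simpa [Fin.ext_iff] using h⟩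
  change _ = ∑ u, f (e u)
  rw [← Finset.sum_map Finset.univ e f]
  refine (Finset.sum_subset (Finset.subset_univ _) fun l _ hl => hf l ?_).symm
  by_contra! hwin
  exact hl (Finset.mem_map.2
    ⟨⟨l - m, by omega⟩, Finset.mem_univ _, Fin.ext (show m + (l - m) = (l : ℕ) by omega)⟩)

theorem Matrix.rank_le_card_of_forall_exists_vecMul {m n k R : Type*} [Fintype m] [Fintype n]
    [Fintype k] [CommSemiring R] [StrongRankCondition R] (A : Matrix m n R) (W : Matrix k n R)
    (h : ∀ i, ∃ v, A i = v ᵥ* W) : A.rank ≤ Fintype.card k := by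
  choose V hV using h
  have hA : A = Matrix.of V * W := by
    ext i j
    rw [hV i]
    rfl
  rw [hA]
  exact (rank_mul_le_right _ W).trans (rank_le_card_height W)

section aGT

variable {r : ℕ} (a : ℕ → Matrix (Fin r) (Fin r) ℂ)

theorem aGT_of_le {i k : ℕ} (hik : i ≤ k + 1) : aGT r a i k = 1 := by
  simp [aGT, show i - 1 - k = 0 by omega]

theorem aGT_succ {i k : ℕ} (hki : k < i) : aGT r a (i + 1) k = a i * aGT r a i k := by
  rw [aGT, aGT, show i + 1 - 1 - k = (i - 1 - k) + 1 by omega, List.range'_concat,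
    show k + 1 + 1 * (i - 1 - k) = i by omega]
  simp

end aGT

theorem blkD_eq_zero {r : ℕ} {M : Matrix (Fin (r + 1)) (Fin (r + 1)) ℂ} (hr : 0 < r)
    (hM : ∀ i j : Fin (r + 1), (i : ℕ) < j → M i j = 0) : blkD r M = 0 :=
  hM _ _ (by simpa using hr)

section Embed

variable {N r : ℕ}

theorem embed_apply_of_outside (M : Matrix (Fin (r + 1)) (Fin (r + 1)) ℂ) {m : ℕ} {i : Fin N}
    (hi : (i : ℕ) < m ∨ m + r + 1 ≤ i) (l : Fin N) :
    embed N r (m + 1) M i l = (1 : Matrix (Fin N) (Fin N) ℂ) i l := by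
  simp only [embed, Matrix.of_apply, Matrix.one_apply, Fin.ext_iff]
  rw [dif_neg (by omega)]

theorem embed_mul_apply_of_outside (M : Matrix (Fin (r + 1)) (Fin (r + 1)) ℂ)
    (B : Matrix (Fin N) (Fin N) ℂ) {m : ℕ} {i : Fin N} (hi : (i : ℕ) < m ∨ m + r + 1 ≤ i)
    (j : Fin N) : (embed N r (m + 1) M * B) i j = B i j := by
  conv_rhs => rw [← Matrix.one_mul B]
  simp only [Matrix.mul_apply, embed_apply_of_outside M hi]

theorem embed_mul_apply_of_window (M : Matrix (Fin (r + 1)) (Fin (r + 1)) ℂ)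
    (B : Matrix (Fin N) (Fin N) ℂ) {m : ℕ} (hm : m + r + 1 ≤ N) (v : Fin (r + 1)) (j : Fin N) :
    (embed N r (m + 1) M * B) ⟨m + v, by omega⟩ j
      = ∑ u : Fin (r + 1), M v u * B ⟨m + u, by omega⟩ j := by
  rw [Matrix.mul_apply, Fin.sum_univ_eq_sum_window m (by omega : m + (r + 1) ≤ N)]
  · refine Finset.sum_congr rfl fun u _ => ?_
    simp only [embed, Matrix.of_apply]
    rw [dif_pos (by omega)]
    congr <;> simp
  · intro l hl
    simp only [embed, Matrix.of_apply]
    rw [dif_neg (by omega), if_neg (by omega), zero_mul]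

theorem embedLast_mul_apply_of_lt (M : Matrix (Fin r) (Fin r) ℂ) (B : Matrix (Fin N) (Fin N) ℂ)
    {i : Fin N} (hi : (i : ℕ) < N - r) (j : Fin N) : (embedLast N r M * B) i j = B i j := by
  conv_rhs => rw [← Matrix.one_mul B]
  simp only [Matrix.mul_apply, embedLast, Matrix.of_apply, Matrix.one_apply, Fin.ext_iff]
  refine Finset.sum_congr rfl fun l _ => ?_
  rw [dif_neg (by omega)]

theorem embedLast_mul_apply_of_ge (M : Matrix (Fin r) (Fin r) ℂ) (B : Matrix (Fin N) (Fin N) ℂ)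
    (hrN : r ≤ N) (t : Fin r) (j : Fin N) :
    (embedLast N r M * B) ⟨N - r + t, by omega⟩ j
      = ∑ u : Fin r, M t u * B ⟨N - r + u, by omega⟩ j := by
  rw [Matrix.mul_apply, Fin.sum_univ_eq_sum_window (N - r) (by omega : N - r + r ≤ N)]
  · refine Finset.sum_congr rfl fun u _ => ?_
    simp only [embedLast, Matrix.of_apply]
    rw [dif_pos (by omega)]
    congr <;> simp
  · intro l hl
    simp only [embedLast, Matrix.of_apply]
    rw [dif_neg (by omega), if_neg (by omega), zero_mul]

end Embed

def IsLowerTriangularFactors (N r : ℕ) (Lk : ℕ → Matrix (Fin (r + 1)) (Fin (r + 1)) ℂ) : Prop :=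
  ∀ k, 1 ≤ k → k ≤ N - r → ∀ i j : Fin (r + 1), (i : ℕ) < j → Lk k i j = 0

section PartialProducts

variable {N r : ℕ} (Lk : ℕ → Matrix (Fin (r + 1)) (Fin (r + 1)) ℂ)

def partialProd (N r : ℕ) (Lk : ℕ → Matrix (Fin (r + 1)) (Fin (r + 1)) ℂ) (m : ℕ) :
    Matrix (Fin N) (Fin N) ℂ :=
  (((List.range' 1 m).reverse).map fun k => embed N r k (Lk k)).prod

/-- Rows `n + 1, …, n + r` (1-based) of `L̃_n ⋯ L̃_1`, the rows that later factors still
act on (`partialProd_apply_pending`). -/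
def pendingRows (N r : ℕ) (Lk : ℕ → Matrix (Fin (r + 1)) (Fin (r + 1)) ℂ) :
    ℕ → Matrix (Fin r) (Fin N) ℂ
  | 0 => Matrix.of fun t j => if (j : ℕ) = t then 1 else 0
  | n + 1 => blkA r (Lk (n + 1)) * pendingRows N r Lk n +
      Matrix.of fun (t : Fin r) (j : Fin N) =>
        blkQ r (Lk (n + 1)) t 0 * if (j : ℕ) = n + r then 1 else 0

theorem prodDesc_eq_partialProd : prodDesc N r Lk = partialProd N r Lk (N - r) := rfl

theorem partialProd_zero : partialProd N r Lk 0 = 1 := by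
  simp [partialProd]

theorem partialProd_succ (m : ℕ) :
    partialProd N r Lk (m + 1) = embed N r (m + 1) (Lk (m + 1)) * partialProd N r Lk m := by
  rw [partialProd, partialProd, List.range'_concat, show 1 + 1 * m = m + 1 by omega]
  simp

theorem partialProd_apply_of_add_le {m : ℕ} {i : Fin N} (hi : m + r ≤ i) (j : Fin N) :
    partialProd N r Lk m i j = (1 : Matrix (Fin N) (Fin N) ℂ) i j := by
  induction m with
  | zero => rw [partialProd_zero]
  | succ m ih =>
    rw [partialProd_succ, embed_mul_apply_of_outside _ _ (Or.inr (by omega)), ih (by omega)]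

theorem partialProd_apply_pending {m : ℕ} (hm : m + r ≤ N) (t : Fin r) (j : Fin N) :
    partialProd N r Lk m ⟨m + t, by omega⟩ j = pendingRows N r Lk m t j := by
  induction m generalizing t with
  | zero =>
    simp [partialProd_zero, pendingRows, Matrix.one_apply, Fin.ext_iff, eq_comm]
  | succ m ih =>
    have hrow : (⟨m + 1 + t, by omega⟩ : Fin N) = ⟨m + (t.succ : ℕ), by omega⟩ :=
      Fin.ext (by simp; omega)
    rw [partialProd_succ, hrow, embed_mul_apply_of_window _ _ (by omega), Fin.sum_univ_castSucc]
    simp only [pendingRows, Matrix.add_apply, Matrix.mul_apply, Matrix.of_apply]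
    congr 1
    · refine Finset.sum_congr rfl fun u _ => ?_
      rw [← ih (by omega)]
      rfl
    · rw [partialProd_apply_of_add_le _ (by simp), Matrix.one_apply]
      simp [blkQ, Fin.ext_iff, eq_comm]

theorem partialProd_apply_of_lt {m : ℕ} (hm : m + r ≤ N)
    (hd : ∀ k, 1 ≤ k → k ≤ m → blkD r (Lk k) = 0) {i : Fin N} (hi : (i : ℕ) < m) (j : Fin N) :
    partialProd N r Lk m i j = (blkP r (Lk (i + 1)) * pendingRows N r Lk i) 0 j := by
  induction m with
  | zero => omega
  | succ m ih =>
    rw [partialProd_succ]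
    rcases Nat.lt_or_ge i m with him | him
    · rw [embed_mul_apply_of_outside _ _ (Or.inl him),
        ih (by omega) (fun k hk1 hk2 => hd k hk1 (by omega)) him]
    · have hrow := embed_mul_apply_of_window (Lk (m + 1)) (partialProd N r Lk m)
        (by omega : m + r + 1 ≤ N) 0 j
      have hlast : Lk (m + 1) 0 (Fin.last r) = 0 := hd (m + 1) le_add_self le_rfl
      simp only [Fin.val_zero, add_zero, Fin.sum_univ_castSucc, hlast, zero_mul] at hrow
      conv_lhs => rw [show i = ⟨m, by omega⟩ from Fin.ext (show (i : ℕ) = m by omega), hrow]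
      rw [show (i : ℕ) = m by omega, Matrix.mul_apply]
      refine Finset.sum_congr rfl fun u _ => ?_
      rw [← partialProd_apply_pending Lk (by omega)]
      rfl

theorem pendingRows_succ_apply_of_ne {n : ℕ} {j : Fin N} (hj : (j : ℕ) ≠ n + r) (t : Fin r) :
    pendingRows N r Lk (n + 1) t j = (blkA r (Lk (n + 1)) * pendingRows N r Lk n) t j := by
  simp [pendingRows, hj]

theorem pendingRows_apply_eq_zero (hL : IsLowerTriangularFactors N r Lk)
    {n : ℕ} (hn : n ≤ N - r) (t : Fin r) {j : Fin N} (htj : n + t < j) :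
    pendingRows N r Lk n t j = 0 := by
  induction n generalizing t with
  | zero =>
    simp only [pendingRows, Matrix.of_apply]
    rw [if_neg (Nat.ne_of_gt (by simpa using htj))]
  | succ n ih =>
    have hq : blkQ r (Lk (n + 1)) t 0 * (if (j : ℕ) = n + r then 1 else 0) = 0 := by
      by_cases hjn : (j : ℕ) = n + r
      · rw [show blkQ r (Lk (n + 1)) t 0 = 0 from hL _ le_add_self hn _ _ (by simp; omega),
          zero_mul]
      · rw [if_neg hjn, mul_zero]
    simp only [pendingRows, Matrix.add_apply, Matrix.of_apply, hq, add_zero, Matrix.mul_apply]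
    refine Finset.sum_eq_zero fun s _ => ?_
    by_cases hst : (s : ℕ) ≤ t + 1
    · rw [ih (by omega) s (by omega), mul_zero]
    · rw [show blkA r (Lk (n + 1)) t s = 0 from hL _ le_add_self hn _ _ (by simp; omega),
        zero_mul]

theorem pendingRows_apply_eq_aGT_mul {k m : ℕ} (hkm : k ≤ m) {j : Fin N} (hj : (j : ℕ) < k + r)
    (t : Fin r) :
    pendingRows N r Lk m t j
      = (aGT r (fun i => blkA r (Lk i)) (m + 1) k * pendingRows N r Lk k) t j := by
  induction m, hkm using Nat.le_induction generalizing t with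
  | base => rw [aGT_of_le _ le_rfl, Matrix.one_mul]
  | succ m hkm ih =>
    rw [pendingRows_succ_apply_of_ne Lk (by omega), aGT_succ _ (by omega), Matrix.mul_assoc,
      Matrix.mul_apply, Matrix.mul_apply]
    exact Finset.sum_congr rfl fun s _ => by rw [ih s]

theorem pendingRows_apply_lastCol (hL : IsLowerTriangularFactors N r Lk)
    {n : ℕ} (hn1 : 1 ≤ n) (hn : n ≤ N - r) (t : Fin r) :
    pendingRows N r Lk n t ⟨n + r - 1, by omega⟩ = blkQ r (Lk n) t 0 := by
  obtain ⟨n, rfl⟩ : ∃ n', n = n' + 1 := ⟨n - 1, by omega⟩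
  have hcol : n + 1 + r - 1 = n + r := by omega
  simp only [pendingRows, Matrix.add_apply, Matrix.of_apply, hcol, if_true, mul_one,
    Matrix.mul_apply]
  rw [Finset.sum_eq_zero fun s _ => by
    rw [pendingRows_apply_eq_zero Lk hL (by omega) s (by simp), mul_zero], zero_add]

theorem mul_pendingRows_apply_eq_aGT_mul {ι : Type*} [Fintype ι] (M : Matrix ι (Fin r) ℂ)
    {k m : ℕ} (hkm : k ≤ m) (x : ι) {j : Fin N} (hj : (j : ℕ) < k + r) :
    (M * pendingRows N r Lk m) x j
      = (M * aGT r (fun i => blkA r (Lk i)) (m + 1) k * pendingRows N r Lk k) x j := by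
  rw [Matrix.mul_assoc, Matrix.mul_apply, Matrix.mul_apply]
  exact Finset.sum_congr rfl fun t _ => by rw [pendingRows_apply_eq_aGT_mul Lk hkm hj]

theorem mul_pendingRows_apply_of_lt {ι : Type*} [Fintype ι] (M : Matrix ι (Fin r) ℂ) (m : ℕ)
    (x : ι) (o : Fin r) (ho : (o : ℕ) < N) :
    (M * pendingRows N r Lk m) x ⟨o, ho⟩
      = (M * aGT r (fun i => blkA r (Lk i)) (m + 1) 0) x o := by
  rw [mul_pendingRows_apply_eq_aGT_mul Lk M (Nat.zero_le m) x (by simp), Matrix.mul_apply]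
  simp [pendingRows, Fin.val_eq_val]

theorem mul_pendingRows_apply_lastCol {ι : Type*} [Fintype ι]
    (hL : IsLowerTriangularFactors N r Lk)
    (M : Matrix ι (Fin r) ℂ) {s m : ℕ} (hs : 1 ≤ s) (hsm : s ≤ m) (hm : m ≤ N - r) (x : ι)
    {j : Fin N} (hj : (j : ℕ) = s + r - 1) :
    (M * pendingRows N r Lk m) x j
      = (M * aGT r (fun i => blkA r (Lk i)) (m + 1) s * blkQ r (Lk s)) x 0 := by
  rw [show j = ⟨s + r - 1, by omega⟩ from Fin.ext hj,
    mul_pendingRows_apply_eq_aGT_mul Lk M hsm x (by simp; omega), Matrix.mul_apply,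
    Matrix.mul_apply]
  exact Finset.sum_congr rfl fun t _ => by
    rw [pendingRows_apply_lastCol Lk hL hs (by omega)]

end PartialProducts

section Product

variable {N r : ℕ} (Lk : ℕ → Matrix (Fin (r + 1)) (Fin (r + 1)) ℂ)
  (Llast : Matrix (Fin r) (Fin r) ℂ)

theorem embedLast_mul_prodDesc_apply_of_lt (hr : 0 < r)
    (hL : IsLowerTriangularFactors N r Lk)
    {x : Fin N} (hx : (x : ℕ) < N - r) (j : Fin N) :
    (embedLast N r Llast * prodDesc N r Lk) x j
      = (blkP r (Lk (x + 1)) * pendingRows N r Lk x) 0 j := by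
  rw [embedLast_mul_apply_of_lt _ _ hx, prodDesc_eq_partialProd,
    partialProd_apply_of_lt Lk (by omega)
      (fun k hk1 hk2 => blkD_eq_zero hr (hL k hk1 hk2)) hx]

theorem embedLast_mul_prodDesc_apply_of_ge (hrN : r ≤ N) (t : Fin r) {x : Fin N}
    (hx : (x : ℕ) = N - r + t) (j : Fin N) :
    (embedLast N r Llast * prodDesc N r Lk) x j = (Llast * pendingRows N r Lk (N - r)) t j := by
  rw [show x = ⟨N - r + t, by omega⟩ from Fin.ext hx, embedLast_mul_apply_of_ge _ _ hrN,
    Matrix.mul_apply]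
  exact Finset.sum_congr rfl fun u _ => by
    rw [prodDesc_eq_partialProd, partialProd_apply_pending Lk (by omega)]

theorem embedLast_mul_prodDesc_apply_eq_zero_of_lt (hr : 0 < r) (hrN : r ≤ N)
    (hL : IsLowerTriangularFactors N r Lk)
    (hLlast : ∀ i j : Fin r, (i : ℕ) < j → Llast i j = 0)
    (i j : Fin N) (hij : (i : ℕ) < j) : (embedLast N r Llast * prodDesc N r Lk) i j = 0 := by
  rcases Nat.lt_or_ge i (N - r) with hi | hi
  · rw [embedLast_mul_prodDesc_apply_of_lt Lk Llast hr hL hi, Matrix.mul_apply]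
    refine Finset.sum_eq_zero fun s _ => ?_
    rcases Nat.eq_zero_or_pos s with hs | hs
    · rw [pendingRows_apply_eq_zero Lk hL (by omega) s (by omega), mul_zero]
    · rw [show blkP r (Lk (i + 1)) 0 s = 0 from hL _ le_add_self (by omega) _ _ (by simpa),
        zero_mul]
  · let t : Fin r := ⟨i - (N - r), by omega⟩
    rw [embedLast_mul_prodDesc_apply_of_ge Lk Llast hrN t (by simp [t]; omega), Matrix.mul_apply]
    refine Finset.sum_eq_zero fun s _ => ?_
    rcases Nat.lt_or_ge t s with hts | hts
    · rw [hLlast t s hts, zero_mul]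
    · rw [pendingRows_apply_eq_zero Lk hL le_rfl s (by simp [t] at hts; omega), mul_zero]

theorem exists_vecMul_pendingRows_eq_embedLast_mul_prodDesc (hr : 0 < r) (hrN : r ≤ N)
    (hL : IsLowerTriangularFactors N r Lk)
    {k : ℕ} (hk : k ≤ N - r) (x : Fin N) (hkx : k ≤ x) :
    ∃ v : Fin r → ℂ, ∀ j : Fin N, (j : ℕ) < k + r →
      (embedLast N r Llast * prodDesc N r Lk) x j = (v ᵥ* pendingRows N r Lk k) j := by
  rcases Nat.lt_or_ge x (N - r) with hx | hx
  · refine ⟨(blkP r (Lk (x + 1)) * aGT r (fun i => blkA r (Lk i)) (x + 1) k) 0,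
      fun j hj => ?_⟩
    rw [embedLast_mul_prodDesc_apply_of_lt Lk Llast hr hL hx,
      mul_pendingRows_apply_eq_aGT_mul Lk _ hkx 0 hj]
    rfl
  · let t : Fin r := ⟨x - (N - r), by omega⟩
    refine ⟨(Llast * aGT r (fun i => blkA r (Lk i)) (N - r + 1) k) t, fun j hj => ?_⟩
    rw [embedLast_mul_prodDesc_apply_of_ge Lk Llast hrN t (by simp [t]; omega),
      mul_pendingRows_apply_eq_aGT_mul Lk _ hk t hj]
    rfl

theorem isLowerGreen_embedLast_mul_prodDesc (hr : 0 < r) (hrN : r ≤ N)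
    (hL : IsLowerTriangularFactors N r Lk) :
    IsLowerGreen N r (embedLast N r Llast * prodDesc N r Lk) := by
  intro k hk1 hk2
  refine (Matrix.rank_le_card_of_forall_exists_vecMul _
    ((pendingRows N r Lk (k - 1)).submatrix id
      fun j : Fin (k + r - 1) => ⟨j, by have := j.isLt; omega⟩) fun i => ?_).trans_eq
    (Fintype.card_fin r)
  obtain ⟨v, hv⟩ := exists_vecMul_pendingRows_eq_embedLast_mul_prodDesc Lk Llast hr hrN hL
    (k := k - 1) (by omega) ⟨k - 1 + i, by omega⟩ (by simp)
  exact ⟨v, funext fun j => hv _ (by simp; omega)⟩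

theorem isLowerGreenGenerators_embedLast_mul_prodDesc (hr : 0 < r) (hNr : r < N)
    (hL : IsLowerTriangularFactors N r Lk) :
    IsLowerGreenGenerators N r hNr (fun k => blkP r (Lk k)) (fun k => blkQ r (Lk k))
      (fun k => blkA r (Lk k)) Llast (embedLast N r Llast * prodDesc N r Lk) := by
  refine ⟨fun i hi1 hi2 j => ?_, fun i hi1 hi2 s hs1 hs2 => ?_, fun t j => ?_,
    fun t s hs1 hs2 => ?_⟩
  · rw [embedLast_mul_prodDesc_apply_of_lt Lk Llast hr hL (by simp; omega), Fin.val_mk,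
      mul_pendingRows_apply_of_lt, show i - 1 + 1 = i by omega]
  · rw [embedLast_mul_prodDesc_apply_of_lt Lk Llast hr hL (by simp; omega), Fin.val_mk,
      mul_pendingRows_apply_lastCol Lk hL _ (s := s - 1) (by omega) (by omega) (by omega) 0
        (by simp; omega), show i - 1 + 1 = i by omega]
  · rw [embedLast_mul_prodDesc_apply_of_ge Lk Llast hNr.le t rfl, mul_pendingRows_apply_of_lt]
  · rw [embedLast_mul_prodDesc_apply_of_ge Lk Llast hNr.le t rfl,
      mul_pendingRows_apply_lastCol Lk hL _ (s := s - 1) (by omega) (by omega) le_rfl t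
        (by simp; omega)]

end Product

/-- If all the factors `L_k` (and `L_{N-r+1}`) are lower triangular, then the product
`G = L̃_{N-r+1}·L̃_{N-r}⋯L̃_1` is a lower triangular, lower Green and upper band matrix of
order `r`, with lower Green generators given by the blocks of the `L_k`. -/
theorem lowerTriangular_product_is_lowerGreen (N r : ℕ) (hr : 0 < r) (hNr : r < N)
    (Lk : ℕ → Matrix (Fin (r + 1)) (Fin (r + 1)) ℂ) (Llast : Matrix (Fin r) (Fin r) ℂ)
    (hLk : ∀ (k : ℕ), 1 ≤ k → k ≤ N - r →
      ∀ i j : Fin (r + 1), (i : ℕ) < (j : ℕ) → Lk k i j = 0)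
    (hLlast : ∀ i j : Fin r, (i : ℕ) < (j : ℕ) → Llast i j = 0)
    (G : Matrix (Fin N) (Fin N) ℂ)
    (hG : G = embedLast N r Llast * prodDesc N r Lk) :
    (∀ i j : Fin N, (i : ℕ) < (j : ℕ) → G i j = 0) ∧
    IsLowerGreen N r G ∧ IsUpperBand N r G ∧
    IsLowerGreenGenerators N r hNr (fun k => blkP r (Lk k)) (fun k => blkQ r (Lk k))
      (fun k => blkA r (Lk k)) Llast G := by
  subst hG
  have hLower := embedLast_mul_prodDesc_apply_eq_zero_of_lt Lk Llast hr hNr.le hLk hLlast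
  exact ⟨hLower, isLowerGreen_embedLast_mul_prodDesc Lk Llast hr hNr.le hLk,
    fun i j hij => hLower i j (by omega),
    isLowerGreenGenerators_embedLast_mul_prodDesc Lk Llast hr hNr hLk⟩
end
end
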